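/- Let β > 1/3 and define g(x) = 2βx(e^{2x} + e^{-2x}) − (e^{2x} − e^{-2x}) + (4 − 4β)x. Then g(x) ≥ 0 for all x ≥ 0. -/

import Mathlib

/-!
Put `t = 2x`. Since `e^t + e^{-t} = 2 cosh t` and `e^t - e^{-t} = 2 sinh t`, the expression equals
`2 (β - 1/3) t (cosh t - 1) + (2/3) (t cosh t + 2t - 3 sinh t)`.
The first term is nonnegative because `β > 1/3`, and the second because the function
`t cosh t + 2t - 3 sinh t` vanishes at `0` together with its first two derivatives while its third
derivative `t sinh t` is nonnegative on `[0, ∞)`.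
-/

open Real Set

lemma le_of_hasDerivAt_of_nonneg {f f' : ℝ → ℝ} (hf : ∀ t, HasDerivAt f (f' t) t)
    (hf' : ∀ t, 0 < t → 0 ≤ f' t) {t : ℝ} (ht : 0 ≤ t) : f 0 ≤ f t := by
  have hmono : MonotoneOn f (Ici 0) :=
    monotoneOn_of_hasDerivWithinAt_nonneg (convex_Ici 0)
      (fun x _ => (hf x).continuousAt.continuousWithinAt)
      (fun x _ => (hf x).hasDerivWithinAt)
      (fun x hx => hf' x (by rwa [interior_Ici] at hx))
  exact hmono self_mem_Ici ht ht

lemma sinh_le_mul_cosh {t : ℝ} (ht : 0 ≤ t) : sinh t ≤ t * cosh t := by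
  have hderiv (s : ℝ) : HasDerivAt (fun s => s * cosh s - sinh s) (s * sinh s) s := by
    refine (((hasDerivAt_id' s).mul (hasDerivAt_cosh s)).sub (hasDerivAt_sinh s)).congr_deriv ?_
    ring
  have := le_of_hasDerivAt_of_nonneg hderiv
    (fun s hs => mul_nonneg hs.le (sinh_nonneg_iff.2 hs.le)) ht
  simp only [zero_mul, sinh_zero, sub_zero] at this
  linarith

lemma two_mul_cosh_le_mul_sinh_add_two {t : ℝ} (ht : 0 ≤ t) :
    2 * cosh t ≤ t * sinh t + 2 := by
  have hderiv (s : ℝ) :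
      HasDerivAt (fun s => s * sinh s + 2 - 2 * cosh s) (s * cosh s - sinh s) s := by
    refine ((((hasDerivAt_id' s).mul (hasDerivAt_sinh s)).add_const 2).sub
      ((hasDerivAt_cosh s).const_mul 2)).congr_deriv ?_
    ring
  have := le_of_hasDerivAt_of_nonneg hderiv
    (fun s hs => sub_nonneg.2 (sinh_le_mul_cosh hs.le)) ht
  simp only [zero_mul, cosh_zero] at this
  linarith

lemma three_mul_sinh_le_mul_cosh_add_two_mul {t : ℝ} (ht : 0 ≤ t) :
    3 * sinh t ≤ t * cosh t + 2 * t := by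
  have hderiv (s : ℝ) : HasDerivAt (fun s => s * cosh s + 2 * s - 3 * sinh s)
      (s * sinh s + 2 - 2 * cosh s) s := by
    refine ((((hasDerivAt_id' s).mul (hasDerivAt_cosh s)).add
      ((hasDerivAt_id' s).const_mul 2)).sub ((hasDerivAt_sinh s).const_mul 3)).congr_deriv ?_
    ring
  have := le_of_hasDerivAt_of_nonneg hderiv
    (fun s hs => sub_nonneg.2 (two_mul_cosh_le_mul_sinh_add_two hs.le)) ht
  simp only [zero_mul, mul_zero, sinh_zero, add_zero, sub_zero] at this
  linarith

theorem stmt1 (β : ℝ) (hβ : 1/3 < β) (x : ℝ) (hx : 0 ≤ x) :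
    2 * β * x * (Real.exp (2*x) + Real.exp (-(2*x)))
      - (Real.exp (2*x) - Real.exp (-(2*x))) + (4 - 4*β) * x ≥ 0 := by
  have ht : 0 ≤ 2 * x := by linarith
  have hcosh : Real.exp (2*x) + Real.exp (-(2*x)) = 2 * cosh (2*x) := by
    rw [cosh_eq]; ring
  have hsinh : Real.exp (2*x) - Real.exp (-(2*x)) = 2 * sinh (2*x) := by
    rw [sinh_eq]; ring
  have hβ_part : 0 ≤ (β - 1/3) * (2*x) * (cosh (2*x) - 1) :=
    mul_nonneg (mul_nonneg (by linarith) ht) (sub_nonneg.2 (one_le_cosh _))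
  rw [hcosh, hsinh]
  linarith [three_mul_sinh_le_mul_cosh_add_two_mul ht]
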